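/- arXiv:2011.06549 — 2 statements merged into one kernel-verified Lean document; each statement's English description precedes it below -/
import Mathlib

section
/- Let (P, ≤) be a finite partially ordered set and T ⊆ P a sup-closed subset. For s ∈ T and y ∈ P define η(s, y) = Σ_{z ∈ P : z ≤ y and s is the greatest element of {t ∈ T : t ≤ z}} μ_P(z, y). Then for all s, y ∈ T with s ≤ y one has η(s, y) = μ_T(s, y), where μ_T is the Möbius function of T with the order induced from P. -/
/-!
Write `g(z)` for the greatest element of `T` below `z`, which exists by sup-closure as soon as
some element of `T` lies below `z`. For `s ∈ T` with `s ≤ y`, the interval `[s, y]` of `P` is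
partitioned by the fibres of `g` over `[s, y] ∩ T`, so summing `η(t, y)` over `t ∈ [s, y] ∩ T`
gives `∑_{s ≤ z ≤ y} μ_P(z, y)`, which vanishes for `s < y`. Hence `η(·, y)` satisfies the
recursion defining `μ_T(·, y)`, and both agree at `y`; downward induction gives equality.
-/

open Classical

open Finset

section MoebiusRecursion

variable {P : Type*} [PartialOrder P]

def IsSupClosed (T : Set P) : Prop :=
  ∀ F : Set P, F ⊆ T → F.Nonempty → ∃ s ∈ T, IsLUB F s

theorem eq_of_sum_filter_Icc_eq_zero [Fintype P] {M : Type*} [AddCommGroup M] {T : Set P}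
    {y : P} {f g : P → M} (hy : f y = g y)
    (hf : ∀ s ∈ T, s < y → ∑ t ∈ univ.filter (fun t => t ∈ T ∧ s ≤ t ∧ t ≤ y), f t = 0)
    (hg : ∀ s ∈ T, s < y → ∑ t ∈ univ.filter (fun t => t ∈ T ∧ s ≤ t ∧ t ≤ y), g t = 0) :
    ∀ s ∈ T, s ≤ y → f s = g s := by
  intro s
  induction s using WellFoundedGT.induction with
  | _ s ih =>
    intro hs hsy
    rcases hsy.eq_or_lt with rfl | hlt
    · exact hy
    have hmem : s ∈ univ.filter (fun t => t ∈ T ∧ s ≤ t ∧ t ≤ y) := by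
      simpa using ⟨hs, hsy⟩
    have hrest : ∑ t ∈ (univ.filter (fun t => t ∈ T ∧ s ≤ t ∧ t ≤ y)).erase s, f t
        = ∑ t ∈ (univ.filter (fun t => t ∈ T ∧ s ≤ t ∧ t ≤ y)).erase s, g t := by
      refine sum_congr rfl fun t ht => ?_
      simp only [mem_erase, mem_filter, mem_univ, true_and] at ht
      exact ih t (lt_of_le_of_ne ht.2.2.1 (Ne.symm ht.1)) ht.2.1 ht.2.2.2
    have hfs := hf s hs hlt
    have hgs := hg s hs hlt
    rw [← add_sum_erase _ _ hmem] at hfs hgs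
    exact add_right_cancel (hfs.trans (hrest ▸ hgs).symm)

theorem isGreatest_inter_Iic_iff {T : Set P} {s z : P} :
    IsGreatest (T ∩ Set.Iic z) s ↔ s ∈ T ∧ s ≤ z ∧ ∀ t ∈ T, t ≤ z → t ≤ s := by
  simp [IsGreatest, upperBounds, and_assoc]

theorem IsSupClosed.exists_isGreatest_inter_Iic {T : Set P} (hT : IsSupClosed T) {s z : P}
    (hs : s ∈ T) (hsz : s ≤ z) : ∃ g, IsGreatest (T ∩ Set.Iic z) g := by
  obtain ⟨g, hgT, hlub⟩ := hT (T ∩ Set.Iic z) Set.inter_subset_left ⟨s, hs, hsz⟩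
  exact ⟨g, ⟨hgT, hlub.2 fun _ ht => ht.2⟩, hlub.1⟩

section Eta

variable [Fintype P] {M : Type*} [AddCommMonoid M]

noncomputable def eta (T : Set P) (μ : P → P → M) (s y : P) : M :=
  ∑ z ∈ univ.filter (fun z => z ≤ y ∧ IsGreatest (T ∩ Set.Iic z) s), μ z y

theorem eta_self {T : Set P} (μ : P → P → M) {y : P} (hy : y ∈ T) : eta T μ y y = μ y y := by
  have hfilter : univ.filter (fun z => z ≤ y ∧ IsGreatest (T ∩ Set.Iic z) y) = {y} := by
    ext z
    simp only [mem_filter, mem_univ, true_and, mem_singleton]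
    constructor
    · rintro ⟨hzy, hyz⟩
      exact le_antisymm hzy hyz.1.2
    · rintro rfl
      exact ⟨le_rfl, ⟨hy, Set.mem_Iic.2 le_rfl⟩, fun _ ht => ht.2⟩
  rw [eta, hfilter, sum_singleton]

theorem IsSupClosed.sum_eta_eq_sum_Icc {T : Set P} (hT : IsSupClosed T) (μ : P → P → M)
    {s : P} (hs : s ∈ T) (y : P) :
    ∑ t ∈ univ.filter (fun t => t ∈ T ∧ s ≤ t ∧ t ≤ y), eta T μ t y
      = ∑ z ∈ univ.filter (fun z => s ≤ z ∧ z ≤ y), μ z y := by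
  unfold eta
  rw [sum_comm' (t' := univ.filter (fun z => s ≤ z ∧ z ≤ y))
    (s' := fun z => univ.filter (fun t => IsGreatest (T ∩ Set.Iic z) t))]
  · refine sum_congr rfl fun z hz => ?_
    obtain ⟨g, hg⟩ := hT.exists_isGreatest_inter_Iic hs (mem_filter.1 hz).2.1
    have hfibre : univ.filter (fun t => IsGreatest (T ∩ Set.Iic z) t) = {g} := by
      ext t
      simp only [mem_filter, mem_univ, true_and, mem_singleton]
      exact ⟨fun ht => ht.unique hg, fun ht => ht ▸ hg⟩
    rw [hfibre, sum_singleton]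
  · intro t z
    simp only [mem_filter, mem_univ, true_and]
    constructor
    · rintro ⟨⟨-, hst, -⟩, hzy, ht⟩
      exact ⟨ht, hst.trans ht.1.2, hzy⟩
    · rintro ⟨ht, hsz, hzy⟩
      exact ⟨⟨ht.1.1, ht.2 ⟨hs, hsz⟩, ht.1.2.trans hzy⟩, hzy, ht⟩

end Eta

end MoebiusRecursion

/-- On a sup-closed subset `T` of a finite poset, the Möbius function aggregate `η`
coincides with the Möbius function of `T` (with the induced order). -/
theorem stmt_3 {P : Type*} [PartialOrder P] [Fintype P]
    (T : Set P)
    (hT : ∀ F : Set P, F ⊆ T → F.Nonempty → ∃ s ∈ T, IsLUB F s)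
    (μ : P → P → ℤ)
    (hμ₁ : ∀ x : P, μ x x = 1)
    (hμ₂ : ∀ x y : P, x < y →
      ∑ z ∈ Finset.univ.filter (fun z => x ≤ z ∧ z ≤ y), μ z y = 0)
    (η : P → P → ℤ)
    (hη : ∀ s y : P, η s y =
      ∑ z ∈ Finset.univ.filter
        (fun z => z ≤ y ∧ s ∈ T ∧ s ≤ z ∧ ∀ t ∈ T, t ≤ z → t ≤ s), μ z y)
    (μT : P → P → ℤ)
    (hμT₁ : ∀ s ∈ T, μT s s = 1)
    (hμT₂ : ∀ s ∈ T, ∀ y ∈ T, s < y →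
      ∑ z ∈ Finset.univ.filter (fun z => z ∈ T ∧ s ≤ z ∧ z ≤ y), μT z y = 0) :
    ∀ s ∈ T, ∀ y ∈ T, s ≤ y → η s y = μT s y := by
  have hη_eta : ∀ s y, η s y = eta T μ s y := fun s y => by
    rw [hη, eta]
    exact sum_congr (filter_congr fun z _ => by rw [isGreatest_inter_Iic_iff]) fun _ _ => rfl
  intro s hs y hy hsy
  refine eq_of_sum_filter_Icc_eq_zero (f := (η · y)) ?_ (fun t ht hty => ?_)
    (fun t ht hty => hμT₂ t ht y hy hty) s hs hsy
  · simp only [hη_eta, eta_self μ hy, hμ₁, hμT₁ y hy]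
  · simp only [hη_eta, IsSupClosed.sum_eta_eq_sum_Icc hT μ ht, hμ₂ t y hty]
end

section
/- Let Ω be a finite set and m₁, m₂ : 2^Ω → ℝ. Define the conjunctive combination m₁₂(y) = Σ_{(s₁,s₂) : s₁ ∩ s₂ = y} m₁(s₁) · m₂(s₂), the sum ranging over all pairs of subsets of Ω whose intersection is y. Then for every y ⊆ Ω one has Σ_{x ⊇ y} m₁₂(x) = (Σ_{x ⊇ y} m₁(x)) · (Σ_{x ⊇ y} m₂(x)); that is, the commonality function of the conjunctive combination is the pointwise product of the commonality functions of m₁ and m₂. -/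
/-!
Expanding the commonality of the combination gives a sum of `m₁ s₁ * m₂ s₂` over the pairs with
`y ≤ s₁ ⊓ s₂`, that is, with `y ≤ s₁` and `y ≤ s₂`: this is a product of two independent sums.
-/

open Finset

section Commonality

variable {α R : Type*} [Fintype α] [SemilatticeInf α] [DecidableEq α] [DecidableLE α]
  [CommSemiring R]

def commonality (m : α → R) (y : α) : R :=
  ∑ x ∈ univ.filter (y ≤ ·), m x

def conjunctiveCombination (m₁ m₂ : α → R) (y : α) : R :=
  ∑ p ∈ univ.filter (fun p : α × α => p.1 ⊓ p.2 = y), m₁ p.1 * m₂ p.2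

theorem commonality_conjunctiveCombination (m₁ m₂ : α → R) (y : α) :
    commonality (conjunctiveCombination m₁ m₂) y = commonality m₁ y * commonality m₂ y := by
  have pairs_above : univ.filter (fun p : α × α => p.1 ⊓ p.2 ∈ univ.filter (y ≤ ·)) =
      univ.filter (y ≤ ·) ×ˢ univ.filter (y ≤ ·) := by
    ext p
    simp
  unfold commonality conjunctiveCombination
  rw [sum_fiberwise_eq_sum_filter, pairs_above, sum_mul_sum, sum_product]

end Commonality

open Classical

/-- **The commonality function of a conjunctive combination is the pointwise
product of the commonality functions.** -/
theorem stmt_17 {Ω : Type*} [Fintype Ω] [DecidableEq Ω]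
    (m₁ m₂ m₁₂ : Finset Ω → ℝ)
    (hm₁₂ : ∀ y : Finset Ω, m₁₂ y = ∑ p ∈ Finset.univ.filter
      (fun p : Finset Ω × Finset Ω => p.1 ∩ p.2 = y), m₁ p.1 * m₂ p.2) :
    ∀ y : Finset Ω,
      ∑ x ∈ Finset.univ.filter (fun x => y ⊆ x), m₁₂ x =
      (∑ x ∈ Finset.univ.filter (fun x => y ⊆ x), m₁ x) *
      (∑ x ∈ Finset.univ.filter (fun x => y ⊆ x), m₂ x) := by
  intro y
  have hm : m₁₂ = conjunctiveCombination m₁ m₂ := funext hm₁₂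
  subst hm
  exact commonality_conjunctiveCombination m₁ m₂ y
end
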